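/- If an n-vertex graph G can be transformed into a vertex-disjoint union of cliques by changing at most δn² adjacencies, then G contains at most 3δn³ induced paths of length two (cherries), i.e. at most 3δn³ ordered triples (x,y,z) of distinct vertices with xy, yz edges and xz a non-edge. -/
import Mathlib

open Finset

/-- If `G` can be transformed into a vertex-disjoint union of cliques (a graph with no
induced cherry) by changing at most `δn²` adjacencies, then `G` contains at most `3δn³`
ordered triples `(x, y, z)` of distinct vertices with `xy, yz` edges and `xz` a non-edge. -/
theorem cherry_count_of_close_to_union_of_cliques {n : ℕ} (δ : ℝ)
    (G H : SimpleGraph (Fin n)) [DecidableRel G.Adj] [DecidableRel H.Adj]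
    (hcliques : ∀ x y z : Fin n, H.Adj x y → H.Adj y z → x ≠ z → H.Adj x z)
    (hclose : ((symmDiff G.edgeFinset H.edgeFinset).card : ℝ) ≤ δ * (n : ℝ) ^ 2) :
    ((Finset.univ.filter fun t : Fin n × Fin n × Fin n =>
        t.1 ≠ t.2.1 ∧ t.2.1 ≠ t.2.2 ∧ t.1 ≠ t.2.2 ∧
        G.Adj t.1 t.2.1 ∧ G.Adj t.2.1 t.2.2 ∧ ¬G.Adj t.1 t.2.2).card : ℝ)
      ≤ 3 * δ * (n : ℝ) ^ 3 := by
  classical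
  set D := symmDiff G.edgeFinset H.edgeFinset with hD
  set S := (Finset.univ.filter fun t : Fin n × Fin n × Fin n =>
        t.1 ≠ t.2.1 ∧ t.2.1 ≠ t.2.2 ∧ t.1 ≠ t.2.2 ∧
        G.Adj t.1 t.2.1 ∧ G.Adj t.2.1 t.2.2 ∧ ¬G.Adj t.1 t.2.2) with hS
  have hmem : ∀ a b : Fin n, (s(a,b) ∈ D) ↔ ¬ (G.Adj a b ↔ H.Adj a b) := by
    intro a b
    simp only [hD, Finset.mem_symmDiff, SimpleGraph.mem_edgeFinset,
      SimpleGraph.mem_edgeSet]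
    tauto
  set e : Fin n × Fin n × Fin n → Sym2 (Fin n) := fun t =>
    if s(t.1, t.2.2) ∈ D then s(t.1, t.2.2)
    else if s(t.1, t.2.1) ∈ D then s(t.1, t.2.1) else s(t.2.1, t.2.2) with he
  set f : Fin n × Fin n × Fin n → Fin n × Fin 3 := fun t =>
    if s(t.1, t.2.2) ∈ D then (t.2.1, if t.1 < t.2.2 then (0 : Fin 3) else 1)
    else if s(t.1, t.2.1) ∈ D then (t.2.2, (0 : Fin 3)) else (t.1, (1 : Fin 3)) with hf
  have hSmem : ∀ t : Fin n × Fin n × Fin n, t ∈ S ↔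
      (t.1 ≠ t.2.1 ∧ t.2.1 ≠ t.2.2 ∧ t.1 ≠ t.2.2 ∧
        G.Adj t.1 t.2.1 ∧ G.Adj t.2.1 t.2.2 ∧ ¬G.Adj t.1 t.2.2) := by
    intro t; simp [hS]
  have hmap : ∀ t ∈ S, e t ∈ D := by
    rintro ⟨x, y, z⟩ ht
    obtain ⟨hxy, hyz, hxz, axy, ayz, naxz⟩ := (hSmem _).mp ht
    by_cases h3 : s(x, z) ∈ D
    · simpa [he, h3] using h3
    · by_cases h1 : s(x, y) ∈ D
      · simpa [he, h3, h1] using h1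
      · have hHxz : ¬ H.Adj x z := by
          have := (hmem x z).not.mp (by simpa using h3)
          tauto
        have hHxy : H.Adj x y := by
          have := (hmem x y).not.mp (by simpa using h1)
          tauto
        have hHyz : ¬ H.Adj y z := fun h => hHxz (hcliques x y z hHxy h hxz)
        have h2 : s(y, z) ∈ D := (hmem y z).mpr (by tauto)
        simpa [he, h3, h1] using h2
  -- count fibers
  have hfiber : ∀ p ∈ D, (S.filter fun t => e t = p).card ≤ 3 * n := by
    intro p hp
    have hinj : Set.InjOn f (S.filter fun t => e t = p) := by
      rintro ⟨x, y, z⟩ ht ⟨x', y', z'⟩ ht' hff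
      simp only [Finset.coe_filter, Set.mem_setOf_eq] at ht ht'
      obtain ⟨htS, hte⟩ := ht
      obtain ⟨ht'S, ht'e⟩ := ht'
      obtain ⟨hxy, hyz, hxz, axy, ayz, naxz⟩ := (hSmem _).mp htS
      obtain ⟨hxy', hyz', hxz', axy', ayz', naxz'⟩ := (hSmem _).mp ht'S
      by_cases h3 : s(x, z) ∈ D <;> by_cases h3' : s(x', z') ∈ D
      · -- both slot 3
        rw [he] at hte ht'e
        rw [hf] at hff
        simp only [h3, h3', if_pos] at hte ht'e hff
        simp only [Prod.mk.injEq] at hff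
        obtain ⟨hyy, htag⟩ := hff
        have hee : s(x, z) = s(x', z') := by rw [hte, ht'e]
        rcases Sym2.eq_iff.mp hee with ⟨h1, h2⟩ | ⟨h1, h2⟩
        · simp only [Prod.mk.injEq]; exact ⟨h1, hyy, h2⟩
        · exfalso
          subst h1; subst h2
          rcases lt_or_gt_of_ne hxz with hlt | hlt
          · rw [if_pos hlt, if_neg (asymm hlt)] at htag
            exact absurd htag (by decide)
          · rw [if_neg (asymm hlt), if_pos hlt] at htag
            exact absurd htag (by decide)
      · exfalso
        rw [he] at hte ht'e
        simp only [h3, if_pos] at hte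
        simp only [h3', if_neg, if_false] at ht'e
        have hpn : p ∉ G.edgeFinset := by rw [← hte]; simpa using naxz
        have hpe : p ∈ G.edgeFinset := by
          by_cases h1' : s(x', y') ∈ D
          · rw [if_pos h1'] at ht'e; rw [← ht'e]; simpa using axy'
          · rw [if_neg h1'] at ht'e; rw [← ht'e]; simpa using ayz'
        exact hpn hpe
      · exfalso
        rw [he] at hte ht'e
        simp only [h3', if_pos] at ht'e
        simp only [h3, if_neg, if_false] at hte
        have hpn : p ∉ G.edgeFinset := by rw [← ht'e]; simpa using naxz'
        have hpe : p ∈ G.edgeFinset := by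
          by_cases h1 : s(x, y) ∈ D
          · rw [if_pos h1] at hte; rw [← hte]; simpa using axy
          · rw [if_neg h1] at hte; rw [← hte]; simpa using ayz
        exact hpn hpe
      · -- both non-slot-3
        rw [he] at hte ht'e; rw [hf] at hff
        simp only [h3, h3', if_neg, if_false] at hte ht'e hff
        by_cases h1 : s(x, y) ∈ D <;> by_cases h1' : s(x', y') ∈ D <;>
          simp only [h1, h1', if_pos, if_neg, if_false] at hte ht'e hff <;>
          simp only [Prod.mk.injEq] at hff
        · -- both slot 1
          obtain ⟨hzz, -⟩ := hff
          have hee : s(x, y) = s(x', y') := by rw [hte, ht'e]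
          rcases Sym2.eq_iff.mp hee with ⟨ha, hb⟩ | ⟨ha, hb⟩
          · simp only [Prod.mk.injEq]; exact ⟨ha, hb, hzz⟩
          · exfalso; subst ha; subst hb; subst hzz
            exact naxz (by simpa using ayz')
        · exact absurd hff.2 (by decide)
        · exact absurd hff.2 (by decide)
        · -- both slot 2
          obtain ⟨hxx, -⟩ := hff
          have hee : s(y, z) = s(y', z') := by rw [hte, ht'e]
          rcases Sym2.eq_iff.mp hee with ⟨ha, hb⟩ | ⟨ha, hb⟩
          · simp only [Prod.mk.injEq]; exact ⟨hxx, ha, hb⟩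
          · exfalso; subst ha; subst hb; subst hxx
            exact naxz (by simpa using axy')
    have := Finset.card_le_card_of_injOn f (fun a _ => Finset.mem_univ (f a)) hinj
    calc (S.filter fun t => e t = p).card
        ≤ (Finset.univ : Finset (Fin n × Fin 3)).card := this
      _ = 3 * n := by simp [mul_comm]
  have hcount : S.card ≤ D.card * (3 * n) := by
    rw [Finset.card_eq_sum_card_fiberwise hmap]
    calc ∑ p ∈ D, (S.filter fun t => e t = p).card
        ≤ ∑ _p ∈ D, 3 * n := Finset.sum_le_sum hfiber
      _ = D.card * (3 * n) := by rw [Finset.sum_const, smul_eq_mul]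
  have hS3 : ((S.card : ℝ)) ≤ (D.card : ℝ) * (3 * n) := by
    exact_mod_cast hcount
  calc (S.card : ℝ) ≤ (D.card : ℝ) * (3 * n) := hS3
    _ ≤ (δ * (n : ℝ) ^ 2) * (3 * n) := by
        apply mul_le_mul_of_nonneg_right hclose
        positivity
    _ = 3 * δ * (n : ℝ) ^ 3 := by ring
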